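/- Assume (A1)–(A3). Let u ∈ 𝒰 and x ∈ AC([0,1];ℝⁿ) with x(0) ∈ C₀ and x(t) ∈ C for all t. Then x solves (D) with control u if and only if there exists a nonnegative measurable function ξ supported on I⁰(x) such that ẋ(t) = f_Φ(x(t),u(t)) − ξ(t)∇ψ(x(t)) a.e. on [0,1]. In that case ξ is unique, belongs to L^∞([0,1];ℝ⁺), and satisfies: ξ(t) = 0 for t ∈ I⁻(x); ξ(t) = ‖ẋ(t) − f_Φ(x(t),u(t))‖/‖∇ψ(x(t))‖ ∈ [0, M̄/(2η)] for a.e. t ∈ I⁰(x); and ‖ξ‖_∞ ≤ M̄/(2η). -/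

import Mathlib

open MeasureTheory Filter Set Metric Topology
open scoped RealInnerProductSpace

noncomputable section

/-- The proximal normal cone to `S` at `x`. -/
def proxNC {H : Type*} [NormedAddCommGroup H] [InnerProductSpace ℝ H]
    (S : Set H) (x : H) : Set H :=
  {ζ | ∃ σ : ℝ, 0 < σ ∧ ∀ y ∈ S, ⟪ζ, y - x⟫ ≤ σ * ‖y - x‖ ^ 2}

/-- The limiting (Mordukhovich) normal cone to `S` at `x`. -/
def limNC {H : Type*} [NormedAddCommGroup H] [InnerProductSpace ℝ H]
    (S : Set H) (x : H) : Set H :=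
  {ζ | ∃ xs ζs : ℕ → H,
    (∀ i, xs i ∈ S ∧ ζs i ∈ proxNC S (xs i)) ∧
    Tendsto xs atTop (nhds x) ∧ Tendsto ζs atTop (nhds ζ)}

/-- The Clarke normal cone to `S` at `x`. -/
def clarkeNC {H : Type*} [NormedAddCommGroup H] [InnerProductSpace ℝ H]
    (S : Set H) (x : H) : Set H :=
  closure (convexHull ℝ (limNC S x))

/-- `x` is absolutely continuous on `[0,1]` with (a.e.) derivative `x'`. -/
def ACOn {H : Type*} [NormedAddCommGroup H] [NormedSpace ℝ H] [CompleteSpace H]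
    (x x' : ℝ → H) : Prop :=
  IntervalIntegrable x' volume 0 1 ∧
  ∀ t ∈ Set.Icc (0:ℝ) 1, x t = x 0 + ∫ s in (0:ℝ)..t, x' s

/-- `f` is in `L²([0,1])`. -/
def L2On {H : Type*} [NormedAddCommGroup H] (f : ℝ → H) : Prop :=
  MemLp f 2 (volume.restrict (Set.Icc (0:ℝ) 1))

/-- Weak convergence in `L²([0,1])`. -/
def WeakL2 {H : Type*} [NormedAddCommGroup H] [InnerProductSpace ℝ H] [CompleteSpace H]
    (F : ℕ → ℝ → H) (f : ℝ → H) : Prop :=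
  ∀ g : ℝ → H, L2On g →
    Tendsto (fun k => ∫ t in Set.Icc (0:ℝ) 1, ⟪F k t, g t⟫) atTop
      (nhds (∫ t in Set.Icc (0:ℝ) 1, ⟪f t, g t⟫))

/-- Strong convergence in `L²([0,1])`. -/
def StrongL2 {H : Type*} [NormedAddCommGroup H] (F : ℕ → ℝ → H) (f : ℝ → H) : Prop :=
  Tendsto (fun k => ∫ t in Set.Icc (0:ℝ) 1, ‖F k t - f t‖ ^ 2) atTop (nhds 0)

/-- `(x, x')` solves the penalized system `(D_γ)` with control `u` and initial point `c`. -/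
def solDgam {n m : ℕ} (ψ : EuclideanSpace ℝ (Fin n) → ℝ)
    (ψ' : EuclideanSpace ℝ (Fin n) → EuclideanSpace ℝ (Fin n))
    (f : EuclideanSpace ℝ (Fin n) → EuclideanSpace ℝ (Fin m) → EuclideanSpace ℝ (Fin n))
    (Φ' : EuclideanSpace ℝ (Fin n) → EuclideanSpace ℝ (Fin n))
    (γr : ℝ) (u : ℝ → EuclideanSpace ℝ (Fin m)) (c : EuclideanSpace ℝ (Fin n))
    (x x' : ℝ → EuclideanSpace ℝ (Fin n)) : Prop :=
  x 0 = c ∧ ACOn x x' ∧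
  ∀ᵐ t ∂(volume.restrict (Set.Icc (0:ℝ) 1)),
    x' t = f (x t) (u t) - Φ' (x t) - (γr * Real.exp (γr * ψ (x t))) • ψ' (x t)

/-- `(x, x')` solves the sweeping process `(D)` (without the initial condition) with
control `u`: `ẋ ∈ f_Φ(x,u) − N_C(x)` a.e. and `x(t) ∈ C` for all `t`. -/
def solD {n m : ℕ} (ψ : EuclideanSpace ℝ (Fin n) → ℝ)
    (f : EuclideanSpace ℝ (Fin n) → EuclideanSpace ℝ (Fin m) → EuclideanSpace ℝ (Fin n))
    (Φ' : EuclideanSpace ℝ (Fin n) → EuclideanSpace ℝ (Fin n))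
    (u : ℝ → EuclideanSpace ℝ (Fin m)) (x x' : ℝ → EuclideanSpace ℝ (Fin n)) : Prop :=
  ACOn x x' ∧ (∀ t ∈ Set.Icc (0:ℝ) 1, ψ (x t) ≤ 0) ∧
  ∀ᵐ t ∂(volume.restrict (Set.Icc (0:ℝ) 1)),
    f (x t) (u t) - Φ' (x t) - x' t ∈ clarkeNC {y : EuclideanSpace ℝ (Fin n) | ψ y ≤ 0} (x t)

/-- `u` is a measurable control: `u ∈ 𝒰`. -/
def ctrlMeas {m : ℕ} (U : ℝ → Set (EuclideanSpace ℝ (Fin m)))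
    (u : ℝ → EuclideanSpace ℝ (Fin m)) : Prop :=
  Measurable u ∧ ∀ᵐ t ∂(volume.restrict (Set.Icc (0:ℝ) 1)), u t ∈ U t

/-- `u` is a `W^{1,2}` control with derivative `u'`: `u ∈ 𝒲`. -/
def ctrlW12 {m : ℕ} (U : ℝ → Set (EuclideanSpace ℝ (Fin m)))
    (u u' : ℝ → EuclideanSpace ℝ (Fin m)) : Prop :=
  ACOn u u' ∧ L2On u' ∧ ∀ t ∈ Set.Icc (0:ℝ) 1, u t ∈ U t

/-- The multiplier property: `ξ` is a nonnegative measurable function supported on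
`I⁰(x) = {t : x(t) ∈ bdry C}` such that `ẋ = f_Φ(x,u) − ξ ∇ψ(x)` a.e. on `[0,1]`. -/
def multP {n m : ℕ} (ψ : EuclideanSpace ℝ (Fin n) → ℝ)
    (ψ' : EuclideanSpace ℝ (Fin n) → EuclideanSpace ℝ (Fin n))
    (f : EuclideanSpace ℝ (Fin n) → EuclideanSpace ℝ (Fin m) → EuclideanSpace ℝ (Fin n))
    (Φ' : EuclideanSpace ℝ (Fin n) → EuclideanSpace ℝ (Fin n))
    (u : ℝ → EuclideanSpace ℝ (Fin m)) (x x' : ℝ → EuclideanSpace ℝ (Fin n))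
    (ξ : ℝ → ℝ) : Prop :=
  Measurable ξ ∧ (∀ t ∈ Set.Icc (0:ℝ) 1, 0 ≤ ξ t) ∧
  (∀ t ∈ Set.Icc (0:ℝ) 1,
    x t ∉ frontier {y : EuclideanSpace ℝ (Fin n) | ψ y ≤ 0} → ξ t = 0) ∧
  ∀ᵐ t ∂(volume.restrict (Set.Icc (0:ℝ) 1)),
    x' t = f (x t) (u t) - Φ' (x t) - ξ t • ψ' (x t)


/-!
At an interior point of `C = {ψ ≤ 0}` every normal cone is `{0}`. At a boundary point `z` the
proximal normals are exactly the nonnegative multiples of `∇ψ(z)`: a proximal normal is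
nonpositive on every direction `v` with `⟪∇ψ(z), v⟫ < 0` (these enter `C`), which forces it onto
the ray, and conversely the Lipschitz gradient gives `C` an exterior sphere at `z`. Since
`∇ψ ≠ 0` is continuous, the ray is stable under the limiting and closed-convex-hull steps, so
the Clarke cone is `ℝ₊ ∇ψ(z)`. Hence `ẋ ∈ f_Φ − N_C(x)` means `ẋ = f_Φ − ξ ∇ψ(x)` with `ξ ≥ 0`
vanishing off `I⁰(x)`; `ξ` is unique as `∇ψ(x) ≠ 0` there, and it is measurable, being a.e.
`⟪∇ψ(x), f_Φ − ẋ⟫ / ‖∇ψ(x)‖²` on the closed set `I⁰(x)`. Finally, almost every `t ∈ I⁰(x)` is an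
interior maximum of `ψ ∘ x`, so `⟪∇ψ(x), ẋ⟫ = 0` and `ξ ‖∇ψ(x)‖² = ⟪∇ψ(x), f_Φ⟫ ≤ ‖∇ψ(x)‖ M̄`,
whence `ξ ≤ M̄ / (2η)`.
-/

lemma nonpos_of_eventually_le_mul {a c : ℝ} (h : ∀ᶠ ε in 𝓝[>] (0 : ℝ), a ≤ ε * c) : a ≤ 0 := by
  have hlim : Tendsto (fun ε : ℝ => ε * c) (𝓝[>] 0) (𝓝 0) := by
    simpa using ((by fun_prop : Continuous fun ε : ℝ => ε * c).tendsto 0).mono_left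
      nhdsWithin_le_nhds
  exact ge_of_tendsto hlim h

section NormalCones

variable {H : Type*} [NormedAddCommGroup H] [InnerProductSpace ℝ H] {S : Set H} {x g ζ : H}

lemma zero_mem_proxNC (S : Set H) (x : H) : (0 : H) ∈ proxNC S x :=
  ⟨1, one_pos, fun y _ => by rw [inner_zero_left]; positivity⟩

lemma smul_mem_proxNC {l : ℝ} (hl : 0 ≤ l) (h : ζ ∈ proxNC S x) : l • ζ ∈ proxNC S x := by
  obtain ⟨σ, hσ, hζ⟩ := h
  refine ⟨l * σ + 1, by positivity, fun y hy => ?_⟩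
  have := mul_le_mul_of_nonneg_left (hζ y hy) hl
  rw [real_inner_smul_left]
  nlinarith [sq_nonneg ‖y - x‖]

lemma mem_limNC_of_mem_proxNC (hx : x ∈ S) (h : ζ ∈ proxNC S x) : ζ ∈ limNC S x :=
  ⟨fun _ => x, fun _ => ζ, fun _ => ⟨hx, h⟩, tendsto_const_nhds, tendsto_const_nhds⟩

lemma limNC_subset_clarkeNC (S : Set H) (x : H) : limNC S x ⊆ clarkeNC S x :=
  (subset_convexHull ℝ _).trans subset_closure

lemma inner_nonpos_of_mem_proxNC {v : H} (h : ζ ∈ proxNC S x)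
    (hv : ∀ᶠ t in 𝓝[>] (0 : ℝ), x + t • v ∈ S) : ⟪ζ, v⟫ ≤ 0 := by
  obtain ⟨σ, -, hζ⟩ := h
  refine nonpos_of_eventually_le_mul (c := σ * ‖v‖ ^ 2) ?_
  filter_upwards [hv, self_mem_nhdsWithin] with t hxt (ht : 0 < t)
  have := hζ _ hxt
  rw [add_sub_cancel_left, real_inner_smul_right, norm_smul, Real.norm_eq_abs,
    abs_of_pos ht] at this
  nlinarith

lemma mem_ray_of_forall_inner_neg (hg : g ≠ 0) (h : ∀ v, ⟪g, v⟫ < 0 → ⟪ζ, v⟫ ≤ 0) :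
    ζ ∈ (fun l : ℝ => l • g) '' Ici 0 := by
  have hg2 : 0 < ‖g‖ ^ 2 := by positivity
  set l := ⟪g, ζ⟫ / ‖g‖ ^ 2
  set w := ζ - l • g
  have hgw : ⟪g, w⟫ = 0 := by
    simp only [w, l, inner_sub_right, real_inner_smul_right, real_inner_self_eq_norm_sq]
    field_simp
    ring
  have hw : ‖w‖ ^ 2 ≤ 0 := by
    refine nonpos_of_eventually_le_mul (c := ⟪ζ, g⟫) (eventually_nhdsWithin_of_forall ?_)
    intro ε (hε : 0 < ε)
    have := h (w - ε • g) (by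
      rw [inner_sub_right, hgw, real_inner_smul_right, real_inner_self_eq_norm_sq]
      nlinarith)
    have hζw : ⟪ζ, w⟫ = ‖w‖ ^ 2 := by
      rw [← real_inner_self_eq_norm_sq, show ζ = w + l • g by simp [w], inner_add_left,
        real_inner_smul_left, hgw, mul_zero, add_zero]
    rw [inner_sub_right, real_inner_smul_right, hζw] at this
    linarith
  have hl : 0 ≤ l := by
    have := h (-g) (by rw [inner_neg_right, real_inner_self_eq_norm_sq]; linarith)
    rw [inner_neg_right, real_inner_comm] at this
    exact div_nonneg (by linarith) hg2.le
  refine ⟨l, hl, ?_⟩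
  have : w = 0 := by simpa using hw
  exact (sub_eq_zero.1 this).symm

lemma mem_ray_of_inner (hg : g ≠ 0) (hnn : 0 ≤ ⟪g, ζ⟫)
    (heq : ‖g‖ ^ 2 • ζ = ⟪g, ζ⟫ • g) : ζ ∈ (fun l : ℝ => l • g) '' Ici 0 := by
  refine ⟨⟪g, ζ⟫ / ‖g‖ ^ 2, div_nonneg hnn (sq_nonneg _), ?_⟩
  dsimp only
  rw [div_eq_inv_mul, mul_smul, ← heq, smul_smul, inv_mul_cancel₀ (by positivity), one_smul]

lemma proxNC_of_mem_interior (hx : x ∈ interior S) : proxNC S x = {0} := by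
  refine subset_antisymm (fun ζ (hζ : ζ ∈ proxNC S x) => ?_)
    (singleton_subset_iff.2 (zero_mem_proxNC S x))
  have hpath : Tendsto (fun t : ℝ => x + t • ζ) (𝓝 0) (𝓝 x) := by
    simpa using (by fun_prop : Continuous fun t : ℝ => x + t • ζ).tendsto 0
  have := inner_nonpos_of_mem_proxNC hζ
    (nhdsWithin_le_nhds (hpath.eventually (mem_interior_iff_mem_nhds.1 hx)))
  rw [real_inner_self_eq_norm_sq] at this
  simpa using this

lemma clarkeNC_of_mem_interior (hx : x ∈ interior S) : clarkeNC S x = {0} := by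
  have hlim : limNC S x = {0} := by
    refine subset_antisymm ?_ (singleton_subset_iff.2
      (mem_limNC_of_mem_proxNC (interior_subset hx) (zero_mem_proxNC S x)))
    rintro ζ ⟨xs, ζs, hmem, hxs, hζs⟩
    have hzero : ∀ᶠ i in atTop, ζs i = 0 := by
      filter_upwards [hxs.eventually (isOpen_interior.mem_nhds hx)] with i hi
      simpa [proxNC_of_mem_interior hi] using (hmem i).2
    exact tendsto_nhds_unique hζs (tendsto_const_nhds.congr' (hzero.mono fun i h => h.symm))
  rw [clarkeNC, hlim, convexHull_singleton, closure_singleton]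

end NormalCones

lemma mem_interior_sublevel_of_neg {X : Type*} [TopologicalSpace X] {φ : X → ℝ} {y : X}
    (hc : ContinuousAt φ y) (hy : φ y < 0) : y ∈ interior {z | φ z ≤ 0} :=
  mem_interior_iff_mem_nhds.2 <| Filter.mem_of_superset (hc.preimage_mem_nhds (Iio_mem_nhds hy))
    fun _ hz => le_of_lt (show φ _ < 0 from hz)

lemma eq_zero_of_mem_frontier_sublevel {X : Type*} [TopologicalSpace X] {φ : X → ℝ} {y : X}
    (hc : ContinuousAt φ y) (hy : y ∈ frontier {z | φ z ≤ 0}) : φ y = 0 := by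
  refine le_antisymm ?_ (not_lt.1 fun hneg => hy.2 (mem_interior_sublevel_of_neg hc hneg))
  exact ContinuousWithinAt.closure_le hy.1 hc.continuousWithinAt continuousWithinAt_const
    fun _ hz => hz

section Sublevel

variable {H : Type*} [NormedAddCommGroup H] [InnerProductSpace ℝ H] [CompleteSpace H]
  {ψ : H → ℝ} {ψ' : H → H} {x g : H}

lemma eventually_sublevel_of_inner_neg (hψ : HasGradientAt ψ g x) (hx : ψ x = 0) {v : H}
    (hv : ⟪g, v⟫ < 0) : ∀ᶠ t in 𝓝[>] (0 : ℝ), ψ (x + t • v) ≤ 0 := by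
  have hline : HasDerivAt (fun t : ℝ => ψ (x + t • v)) ⟪g, v⟫ 0 := by
    have hpath : HasDerivAt (fun t : ℝ => x + t • v) v 0 :=
      ((hasDerivAt_id (0 : ℝ)).smul_const v).const_add x |>.congr_deriv (one_smul ℝ v)
    simpa [Function.comp_def, InnerProductSpace.toDual_apply_apply] using
      hψ.hasFDerivAt.comp_hasDerivAt_of_eq 0 hpath (by simp)
  have hslope := (hasDerivAt_iff_tendsto_slope.1 hline).mono_left
    (nhdsWithin_mono 0 fun t (ht : 0 < t) => ht.ne')
  filter_upwards [hslope.eventually (eventually_lt_nhds hv), self_mem_nhdsWithin]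
    with t hneg (ht : 0 < t)
  have h0 : ψ (x + (0 : ℝ) • v) = 0 := by simpa using hx
  rw [slope_def_field, h0, sub_zero, sub_zero] at hneg
  have := mul_neg_of_pos_of_neg ht hneg
  rw [mul_div_cancel₀ _ ht.ne'] at this
  exact this.le

lemma proxNC_sublevel_subset_ray (hψ : HasGradientAt ψ g x) (hx : ψ x = 0) (hg : g ≠ 0) :
    proxNC {y | ψ y ≤ 0} x ⊆ (fun l : ℝ => l • g) '' Ici 0 := fun _ hζ =>
  mem_ray_of_forall_inner_neg hg fun _ hv =>
    inner_nonpos_of_mem_proxNC hζ (eventually_sublevel_of_inner_neg hψ hx hv)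

open InnerProductSpace in
/-- A `C^{1,1}` sublevel set satisfies the exterior sphere condition at a boundary point. -/
lemma grad_mem_proxNC_sublevel {s : Set H} {K : NNReal} (hs : s ∈ 𝓝 x)
    (hd : ∀ y ∈ s, HasGradientAt ψ (ψ' y) y) (hlip : LipschitzOnWith K ψ' s) (hx : ψ x = 0) :
    ψ' x ∈ proxNC {y | ψ y ≤ 0} x := by
  obtain ⟨r, hr, hball⟩ := Metric.mem_nhds_iff.1 hs
  refine ⟨K + ‖ψ' x‖ / r + 1, by positivity, fun y (hy : ψ y ≤ 0) => ?_⟩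
  have hK : (0 : ℝ) ≤ K := K.2
  have hgr : 0 ≤ ‖ψ' x‖ / r := by positivity
  rcases lt_or_ge ‖y - x‖ r with hnear | hfar
  · have hsub : closedBall x ‖y - x‖ ⊆ s := (closedBall_subset_ball hnear).trans hball
    have htaylor := (convex_closedBall x ‖y - x‖).norm_image_sub_le_of_norm_hasFDerivWithin_le'
      (f' := fun z => toDual ℝ H (ψ' z)) (φ := toDual ℝ H (ψ' x))
      (fun z hz => (hd z (hsub hz)).hasFDerivAt.hasFDerivWithinAt) (fun z hz => by
        rw [← map_sub, LinearIsometryEquiv.norm_map, ← dist_eq_norm]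
        exact (hlip.dist_le_mul z (hsub hz) x (hsub (mem_closedBall_self (norm_nonneg _)))).trans
          (mul_le_mul_of_nonneg_left hz hK))
      (mem_closedBall_self (norm_nonneg _)) (mem_closedBall.2 (dist_eq_norm y x).le)
    rw [toDual_apply_apply, hx, sub_zero, Real.norm_eq_abs] at htaylor
    nlinarith [neg_abs_le (ψ y - ⟪ψ' x, y - x⟫), norm_nonneg (y - x),
      mul_nonneg hgr (sq_nonneg ‖y - x‖)]
  · have : ‖ψ' x‖ * ‖y - x‖ ≤ ‖ψ' x‖ / r * ‖y - x‖ ^ 2 := by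
      rw [div_mul_eq_mul_div, le_div_iff₀ hr]
      nlinarith [mul_le_mul_of_nonneg_left hfar
        (mul_nonneg (norm_nonneg (ψ' x)) (norm_nonneg (y - x)))]
    nlinarith [real_inner_le_norm (ψ' x) (y - x), mul_nonneg hK (sq_nonneg ‖y - x‖),
      sq_nonneg ‖y - x‖]

lemma limNC_sublevel_subset_ray (hd : ∀ᶠ y in 𝓝 x, HasGradientAt ψ (ψ' y) y)
    (hc : ContinuousAt ψ' x) (hg : ψ' x ≠ 0) :
    limNC {y | ψ y ≤ 0} x ⊆ (fun l : ℝ => l • ψ' x) '' Ici 0 := by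
  rintro ζ ⟨xs, ζs, hmem, hxs, hζs⟩
  -- the graph of `g ↦ ℝ₊ g` away from `g = 0`, written as a closed set
  set P : Set (H × H) :=
    {p | 0 ≤ ⟪p.1, p.2⟫} ∩ {p | ‖p.1‖ ^ 2 • p.2 = ⟪p.1, p.2⟫ • p.1}
  have hP : IsClosed P :=
    (isClosed_le continuous_const (continuous_fst.inner continuous_snd)).inter
      (isClosed_eq ((continuous_fst.norm.pow 2).smul continuous_snd)
        ((continuous_fst.inner continuous_snd).smul continuous_fst))
  have hray : ∀ (g : H) (l : ℝ), 0 ≤ l → (g, l • g) ∈ P := fun g l hl => by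
    refine ⟨?_, ?_⟩ <;>
      simp only [mem_ofPred_eq, real_inner_smul_right, real_inner_self_eq_norm_sq, smul_smul]
    · positivity
    · rw [mul_comm]
  have hev : ∀ᶠ i in atTop, (ψ' (xs i), ζs i) ∈ P := by
    filter_upwards [hxs.eventually (hd.and (hc.eventually_ne hg))] with i ⟨hdi, hgi⟩
    rcases (show ψ (xs i) ≤ 0 from (hmem i).1).lt_or_eq with hneg | hzero
    · have : ζs i = 0 := by
        simpa [proxNC_of_mem_interior (mem_interior_sublevel_of_neg hdi.continuousAt hneg)]
          using (hmem i).2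
      simpa [this] using hray (ψ' (xs i)) 0 le_rfl
    · obtain ⟨l, hl, hζ⟩ := proxNC_sublevel_subset_ray hdi hzero hgi (hmem i).2
      rw [← hζ]
      exact hray _ l hl
  have hlim := hP.mem_of_tendsto ((hc.tendsto.comp hxs).prodMk_nhds hζs) hev
  exact mem_ray_of_inner hg hlim.1 hlim.2

lemma clarkeNC_sublevel_eq_ray (hd : ∀ᶠ y in 𝓝 x, HasGradientAt ψ (ψ' y) y)
    (hc : ContinuousAt ψ' x) (hlip : ∃ K : NNReal, ∃ s ∈ 𝓝 x, LipschitzOnWith K ψ' s)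
    (hx : ψ x = 0) (hg : ψ' x ≠ 0) :
    clarkeNC {y | ψ y ≤ 0} x = (fun l : ℝ => l • ψ' x) '' Ici 0 := by
  refine subset_antisymm ?_ ?_
  · refine closure_minimal (convexHull_min (limNC_sublevel_subset_ray hd hc hg) ?_) ?_
    · exact (convex_Ici 0).linear_image (LinearMap.toSpanSingleton ℝ H (ψ' x))
    · exact isClosedMap_smul_left (ψ' x) _ isClosed_Ici
  · obtain ⟨K, s, hs, hslip⟩ := hlip
    rintro _ ⟨l, hl, rfl⟩
    refine limNC_subset_clarkeNC _ _ (mem_limNC_of_mem_proxNC hx.le (smul_mem_proxNC hl ?_))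
    exact grad_mem_proxNC_sublevel (inter_mem hs hd) (fun y hy => hy.2)
      (hslip.mono inter_subset_left) hx

lemma mem_clarkeNC_sublevel_iff {V : Set H} (hV : IsOpen V) (hCV : {y | ψ y ≤ 0} ⊆ V)
    (hd : ∀ y ∈ V, HasGradientAt ψ (ψ' y) y) (hc : ContinuousOn ψ' V)
    (hlip : ∀ y ∈ V, ∃ K : NNReal, ∃ s ∈ 𝓝[V] y, LipschitzOnWith K ψ' s)
    (hnz : ∀ y, ψ y = 0 → ψ' y ≠ 0) {z v : H} (hz : ψ z ≤ 0) :
    v ∈ clarkeNC {y | ψ y ≤ 0} z ↔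
      ∃ l : ℝ, 0 ≤ l ∧ (z ∉ frontier {y | ψ y ≤ 0} → l = 0) ∧ v = l • ψ' z := by
  have hzV : V ∈ 𝓝 z := hV.mem_nhds (hCV hz)
  by_cases hfr : z ∈ frontier {y | ψ y ≤ 0}
  · have h0 := eq_zero_of_mem_frontier_sublevel (hd z (hCV hz)).continuousAt hfr
    obtain ⟨K, s, hs, hslip⟩ := hlip z (hCV hz)
    rw [nhdsWithin_eq_nhds.2 hzV] at hs
    rw [clarkeNC_sublevel_eq_ray (eventually_of_mem hzV hd) (hc.continuousAt hzV)
      ⟨K, s, hs, hslip⟩ h0 (hnz z h0)]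
    simp [hfr, eq_comm]
  · have hint : z ∈ interior {y | ψ y ≤ 0} := by
      by_contra h
      exact hfr ⟨subset_closure hz, h⟩
    rw [clarkeNC_of_mem_interior hint]
    simp [hfr]

end Sublevel

section AbsolutelyContinuous

variable {H : Type*} [NormedAddCommGroup H] [NormedSpace ℝ H] [CompleteSpace H] {x x' : ℝ → H}

lemma ACOn.continuousOn (hx : ACOn x x') : ContinuousOn x (Icc 0 1) := by
  have hprim := intervalIntegral.continuousOn_primitive_interval (a := (0 : ℝ)) (b := 1)
    (μ := volume) (f := x')
    (by rw [uIcc_of_le zero_le_one]; exact (intervalIntegrable_iff_integrableOn_Icc_of_le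
      zero_le_one).1 hx.1)
  rw [uIcc_of_le zero_le_one] at hprim
  exact (continuousOn_const.add hprim).congr hx.2

lemma ACOn.ae_hasDerivAt (hx : ACOn x x') :
    ∀ᵐ t ∂(volume.restrict (Icc (0 : ℝ) 1)), t ∈ Ioo 0 1 ∧ HasDerivAt x (x' t) t := by
  rw [← Measure.restrict_congr_set Ioo_ae_eq_Icc]
  filter_upwards [ae_restrict_mem measurableSet_Ioo,
    ae_restrict_of_ae hx.1.ae_hasDerivAt_integral] with t ht hd
  have hIcc : ∀ {s}, s ∈ Ioo (0 : ℝ) 1 → s ∈ uIcc 0 1 := fun hs => by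
    rw [uIcc_of_le zero_le_one]; exact Ioo_subset_Icc_self hs
  refine ⟨ht, ((hd (hIcc ht) 0 left_mem_uIcc).const_add (x 0)).congr_of_eventuallyEq ?_⟩
  filter_upwards [Ioo_mem_nhds ht.1 ht.2] with s hs
  exact hx.2 s (Ioo_subset_Icc_self hs)

lemma ACOn.aestronglyMeasurable (hx : ACOn x x') :
    AEStronglyMeasurable x' (volume.restrict (Icc (0 : ℝ) 1)) := by
  rw [← Measure.restrict_congr_set Ioc_ae_eq_Icc]
  exact hx.1.1.aestronglyMeasurable

end AbsolutelyContinuous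

/-- Times at which the curve touches `{ψ = 0}` are interior maxima of `ψ ∘ x`. -/
lemma ACOn.ae_inner_grad_eq_zero {E : Type*} [NormedAddCommGroup E] [InnerProductSpace ℝ E]
    [CompleteSpace E] {x x' : ℝ → E} {ψ : E → ℝ} {ψ' : E → E} (hx : ACOn x x')
    (hxC : ∀ t ∈ Icc (0 : ℝ) 1, ψ (x t) ≤ 0)
    (hd : ∀ t ∈ Icc (0 : ℝ) 1, HasGradientAt ψ (ψ' (x t)) (x t)) :
    ∀ᵐ t ∂(volume.restrict (Icc (0 : ℝ) 1)), ψ (x t) = 0 → ⟪ψ' (x t), x' t⟫ = 0 := by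
  filter_upwards [hx.ae_hasDerivAt] with t ⟨ht, hderiv⟩ h0
  have hmax : IsLocalMax (fun s => ψ (x s)) t := by
    filter_upwards [Ioo_mem_nhds ht.1 ht.2] with s hs
    rw [h0]
    exact hxC s (Ioo_subset_Icc_self hs)
  simpa [InnerProductSpace.toDual_apply_apply] using
    hmax.hasDerivAt_eq_zero ((hd t (Ioo_subset_Icc_self ht)).hasFDerivAt.comp_hasDerivAt t hderiv)

lemma LipschitzOnWith.aestronglyMeasurable_comp {α β E : Type*} [MeasurableSpace α]
    {μ : Measure α} [PseudoMetricSpace β] [MeasurableSpace β] [OpensMeasurableSpace β]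
    [NormedAddCommGroup E] [NormedSpace ℝ E] [FiniteDimensional ℝ E] {f : β → E} {s : Set β}
    {K : NNReal} (hf : LipschitzOnWith K f s) {p : α → β} (hp : AEMeasurable p μ)
    (hps : ∀ᵐ a ∂μ, p a ∈ s) : AEStronglyMeasurable (f ∘ p) μ := by
  obtain ⟨F, hF, hfF⟩ := hf.extend_finite_dimension
  exact (hF.continuous.aestronglyMeasurable.comp_aemeasurable hp).congr
    (hps.mono fun a ha => (hfF ha).symm)

lemma exists_measurable_indicator_ae_eq {α : Type*} [MeasurableSpace α] {μ : Measure α}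
    {A : Set α} (hA : MeasurableSet A) {r : α → ℝ} (hr : AEStronglyMeasurable r μ)
    (hr0 : ∀ᵐ a ∂μ, a ∈ A → 0 ≤ r a) :
    ∃ ξ : α → ℝ, Measurable ξ ∧ (∀ a, 0 ≤ ξ a) ∧ (∀ a ∉ A, ξ a = 0) ∧
      ∀ᵐ a ∂μ, a ∈ A → ξ a = r a := by
  refine ⟨A.indicator fun a => max 0 (hr.mk r a),
    (measurable_const.max hr.stronglyMeasurable_mk.measurable).indicator hA,
    fun a => indicator_nonneg (fun _ _ => le_max_left _ _) a,
    fun a ha => indicator_of_notMem ha _, ?_⟩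
  filter_upwards [hr.ae_eq_mk, hr0] with a hmk hnn ha
  rw [indicator_of_mem ha, ← hmk, max_eq_right (hnn ha)]

section Projection

variable {H : Type*} [NormedAddCommGroup H] [InnerProductSpace ℝ H]

lemma eq_inner_div_norm_sq_smul {g v : H} {l : ℝ} (hl : 0 ≤ l) (hv : v = l • g) :
    0 ≤ ⟪g, v⟫ / ‖g‖ ^ 2 ∧ v = (⟪g, v⟫ / ‖g‖ ^ 2) • g := by
  subst hv
  rcases eq_or_ne g 0 with rfl | hg
  · simp
  · rw [real_inner_smul_right, real_inner_self_eq_norm_sq,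
      mul_div_cancel_right₀ _ (by positivity)]
    exact ⟨hl, rfl⟩

lemma multiplier_eq_div_and_le {a b g : H} {ξ Mb η : ℝ} (hb : b = a - ξ • g) (hξ : 0 ≤ ξ)
    (hperp : ⟪g, b⟫ = 0) (ha : ‖a‖ ≤ Mb) (hg : 2 * η < ‖g‖) (hη : 0 < η) :
    ξ = ‖b - a‖ / ‖g‖ ∧ ξ ≤ Mb / (2 * η) := by
  have hgpos : 0 < ‖g‖ := by linarith
  have hnorm : ‖b - a‖ = ξ * ‖g‖ := by
    rw [hb, sub_sub_cancel_left, norm_neg, norm_smul, Real.norm_eq_abs, abs_of_nonneg hξ]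
  refine ⟨by rw [hnorm, mul_div_cancel_right₀ _ hgpos.ne'], ?_⟩
  have hinner : ⟪g, a⟫ = ξ * ‖g‖ * ‖g‖ := by
    rw [hb, inner_sub_right, real_inner_smul_right, real_inner_self_eq_norm_sq] at hperp
    linarith
  have hξg : ξ * ‖g‖ ≤ Mb := by
    refine le_of_mul_le_mul_right ?_ hgpos
    calc ξ * ‖g‖ * ‖g‖ = ⟪g, a⟫ := hinner.symm
      _ ≤ ‖g‖ * ‖a‖ := real_inner_le_norm _ _
      _ ≤ Mb * ‖g‖ := by rw [mul_comm]; gcongr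
  rw [le_div_iff₀ (by positivity)]
  nlinarith

end Projection

section Multiplier

variable {n m : ℕ} {ψ : EuclideanSpace ℝ (Fin n) → ℝ}
  {ψ' Φ' : EuclideanSpace ℝ (Fin n) → EuclideanSpace ℝ (Fin n)}
  {f : EuclideanSpace ℝ (Fin n) → EuclideanSpace ℝ (Fin m) → EuclideanSpace ℝ (Fin n)}
  {u : ℝ → EuclideanSpace ℝ (Fin m)} {x x' : ℝ → EuclideanSpace ℝ (Fin n)} {ξ : ℝ → ℝ}

lemma solD_of_multP (hx : ACOn x x') (hxC : ∀ t ∈ Icc (0 : ℝ) 1, ψ (x t) ≤ 0)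
    (hcone : ∀ z, ψ z ≤ 0 → ∀ v, v ∈ clarkeNC {y | ψ y ≤ 0} z ↔
      ∃ l : ℝ, 0 ≤ l ∧ (z ∉ frontier {y | ψ y ≤ 0} → l = 0) ∧ v = l • ψ' z)
    (hξ : multP ψ ψ' f Φ' u x x' ξ) : solD ψ f Φ' u x x' := by
  refine ⟨hx, hxC, ?_⟩
  filter_upwards [hξ.2.2.2, ae_restrict_mem measurableSet_Icc] with t heq ht
  refine (hcone _ (hxC t ht) _).2 ⟨ξ t, hξ.2.1 t ht, hξ.2.2.1 t ht, ?_⟩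
  rw [heq]
  abel

lemma exists_multP_of_solD (hxC : ∀ t ∈ Icc (0 : ℝ) 1, ψ (x t) ≤ 0)
    (hcone : ∀ z, ψ z ≤ 0 → ∀ v, v ∈ clarkeNC {y | ψ y ≤ 0} z ↔
      ∃ l : ℝ, 0 ≤ l ∧ (z ∉ frontier {y | ψ y ≤ 0} → l = 0) ∧ v = l • ψ' z)
    (hψ' : ContinuousOn ψ' {y | ψ y ≤ 0}) (hΦ' : Continuous Φ')
    (hf : AEStronglyMeasurable (fun t => f (x t) (u t)) (volume.restrict (Icc (0 : ℝ) 1)))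
    (hsol : solD ψ f Φ' u x x') : ∃ ξ, multP ψ ψ' f Φ' u x x' ξ := by
  set μ := volume.restrict (Icc (0 : ℝ) 1)
  set C := {y : EuclideanSpace ℝ (Fin n) | ψ y ≤ 0}
  set v : ℝ → EuclideanSpace ℝ (Fin n) := fun t => f (x t) (u t) - Φ' (x t) - x' t
  set A := Icc (0 : ℝ) 1 ∩ x ⁻¹' frontier C
  have hxc := hsol.1.continuousOn
  have hA : MeasurableSet A :=
    (hxc.preimage_isClosed_of_isClosed isClosed_Icc isClosed_frontier).measurableSet
  have hψ'x : AEStronglyMeasurable (fun t => ψ' (x t)) μ :=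
    (hψ'.comp hxc hxC).aestronglyMeasurable measurableSet_Icc
  have hr : AEStronglyMeasurable (fun t => ⟪ψ' (x t), v t⟫ / ‖ψ' (x t)‖ ^ 2) μ :=
    (hψ'x.inner ((hf.sub ((hΦ'.comp_continuousOn hxc).aestronglyMeasurable
      measurableSet_Icc)).sub hsol.1.aestronglyMeasurable)).div₀ (hψ'x.norm.pow 2)
  have hcone_ae : ∀ᵐ t ∂μ, t ∈ Icc (0 : ℝ) 1 ∧
      ∃ l : ℝ, 0 ≤ l ∧ (x t ∉ frontier C → l = 0) ∧ v t = l • ψ' (x t) := by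
    filter_upwards [hsol.2.2, ae_restrict_mem measurableSet_Icc] with t hv ht
    exact ⟨ht, (hcone _ (hxC t ht) _).1 hv⟩
  have hr_eq : ∀ᵐ t ∂μ, 0 ≤ ⟪ψ' (x t), v t⟫ / ‖ψ' (x t)‖ ^ 2 ∧
      v t = (⟪ψ' (x t), v t⟫ / ‖ψ' (x t)‖ ^ 2) • ψ' (x t) :=
    hcone_ae.mono fun t ⟨_, _, hl, _, hv⟩ => eq_inner_div_norm_sq_smul hl hv
  obtain ⟨ξ, hξm, hξ0, hξA, hξr⟩ :=
    exists_measurable_indicator_ae_eq hA hr (hr_eq.mono fun t h _ => h.1)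
  refine ⟨ξ, hξm, fun t _ => hξ0 t, fun t _ hfr => hξA t fun h => hfr h.2, ?_⟩
  filter_upwards [hcone_ae, hr_eq, hξr] with t ⟨ht, l, _, hl0, hv⟩ ⟨_, hvr⟩ hξt
  rw [sub_eq_iff_eq_add, ← sub_eq_iff_eq_add'] at hv hvr
  by_cases hfr : x t ∈ frontier C
  · rw [hξt ⟨ht, hfr⟩, ← hvr]
  · rw [hξA t fun h => hfr h.2, ← hl0 hfr, ← hv]

lemma multP.ae_eq {ξ₂ : ℝ → ℝ} (hnz : ∀ z ∈ frontier {y | ψ y ≤ 0}, ψ' z ≠ 0)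
    (hξ : multP ψ ψ' f Φ' u x x' ξ) (hξ₂ : multP ψ ψ' f Φ' u x x' ξ₂) :
    ∀ᵐ t ∂(volume.restrict (Icc (0 : ℝ) 1)), ξ t = ξ₂ t := by
  filter_upwards [hξ.2.2.2, hξ₂.2.2.2, ae_restrict_mem measurableSet_Icc] with t e₁ e₂ ht
  by_cases hfr : x t ∈ frontier {y | ψ y ≤ 0}
  · exact smul_left_injective ℝ (hnz _ hfr) (sub_right_injective (e₁.symm.trans e₂))
  · rw [hξ.2.2.1 t ht hfr, hξ₂.2.2.1 t ht hfr]

lemma multP.ae_eq_div {Mb η : ℝ} (hη : 0 < η)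
    (hgrad : ∀ z ∈ frontier {y | ψ y ≤ 0}, 2 * η < ‖ψ' z‖)
    (htan : ∀ᵐ t ∂(volume.restrict (Icc (0 : ℝ) 1)),
      x t ∈ frontier {y | ψ y ≤ 0} → ⟪ψ' (x t), x' t⟫ = 0)
    (hbd : ∀ᵐ t ∂(volume.restrict (Icc (0 : ℝ) 1)), ‖f (x t) (u t) - Φ' (x t)‖ ≤ Mb)
    (hξ : multP ψ ψ' f Φ' u x x' ξ) :
    ∀ᵐ t ∂(volume.restrict (Icc (0 : ℝ) 1)), x t ∈ frontier {y | ψ y ≤ 0} →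
      ξ t = ‖x' t - (f (x t) (u t) - Φ' (x t))‖ / ‖ψ' (x t)‖ ∧ ξ t ≤ Mb / (2 * η) := by
  filter_upwards [hξ.2.2.2, htan, hbd, ae_restrict_mem measurableSet_Icc]
    with t heq hperp hb ht hfr
  exact multiplier_eq_div_and_le heq (hξ.2.1 t ht) (hperp hfr) hb (hgrad _ hfr) hη

lemma multP.ae_abs_le {Mb η : ℝ} (hη : 0 < η) (hMb : 0 ≤ Mb) (hξ : multP ψ ψ' f Φ' u x x' ξ)
    (hle : ∀ᵐ t ∂(volume.restrict (Icc (0 : ℝ) 1)),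
      x t ∈ frontier {y | ψ y ≤ 0} → ξ t ≤ Mb / (2 * η)) :
    ∀ᵐ t ∂(volume.restrict (Icc (0 : ℝ) 1)), |ξ t| ≤ Mb / (2 * η) := by
  filter_upwards [hle, ae_restrict_mem measurableSet_Icc] with t hb ht
  by_cases hfr : x t ∈ frontier {y | ψ y ≤ 0}
  · rw [abs_of_nonneg (hξ.2.1 t ht)]
    exact hb hfr
  · rw [hξ.2.2.1 t ht hfr, abs_zero]
    positivity

end Multiplier

theorem stmt_8_general {n m : ℕ}
    (ψ : EuclideanSpace ℝ (Fin n) → ℝ)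
    (ψ' : EuclideanSpace ℝ (Fin n) → EuclideanSpace ℝ (Fin n))
    (ρ η : ℝ) (hρ : 0 < ρ) (hη : 0 < η)
    -- (A2.1): ψ is C¹ with locally Lipschitz gradient on C + ρB
    (hψd : ∀ x ∈ Metric.thickening ρ {x : EuclideanSpace ℝ (Fin n) | ψ x ≤ 0},
      HasGradientAt ψ (ψ' x) x)
    (hψc : ContinuousOn ψ' (Metric.thickening ρ {x : EuclideanSpace ℝ (Fin n) | ψ x ≤ 0}))
    (hψloclip : ∀ x ∈ Metric.thickening ρ {x : EuclideanSpace ℝ (Fin n) | ψ x ≤ 0},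
      ∃ K : NNReal, ∃ s ∈ nhdsWithin x (Metric.thickening ρ {x : EuclideanSpace ℝ (Fin n) | ψ x ≤ 0}),
        LipschitzOnWith K ψ' s)
    -- (A2.2)
    (hgrad : ∀ x, ψ x = 0 → 2 * η < ‖ψ' x‖)
    -- (A1): the control sets and the Lipschitz, bounded dynamics f
    (U : ℝ → Set (EuclideanSpace ℝ (Fin m)))
    (f : EuclideanSpace ℝ (Fin n) → EuclideanSpace ℝ (Fin m) → EuclideanSpace ℝ (Fin n))
    (M ρt : ℝ)
    (hflip : LipschitzOnWith (Real.toNNReal M)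
      (fun p : (EuclideanSpace ℝ (Fin n)) × (EuclideanSpace ℝ (Fin m)) => f p.1 p.2)
      ({x : EuclideanSpace ℝ (Fin n) | ψ x ≤ 0} ×ˢ
        Metric.cthickening ρt (⋃ t ∈ Set.Icc (0:ℝ) 1, U t)))
    (hfbd : ∀ x, ψ x ≤ 0 → ∀ v ∈ Metric.cthickening ρt (⋃ t ∈ Set.Icc (0:ℝ) 1, U t),
      ‖f x v‖ ≤ M)
    -- (A3) and the C¹ bounded Lipschitz extension Φ of φ, with gradient Φ'
    (Φ' : EuclideanSpace ℝ (Fin n) → EuclideanSpace ℝ (Fin n)) (K : ℝ)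
    (hΦ'bd : ∀ x, ‖Φ' x‖ ≤ K)
    (hΦ'lip : LipschitzWith (Real.toNNReal K) Φ')
    (Mb : ℝ) (hMbdef : Mb = M + K)
    -- the data: u ∈ 𝒰, x absolutely continuous, x(0) ∈ C₀, x(t) ∈ C for all t
    (u : ℝ → EuclideanSpace ℝ (Fin m)) (hu : ctrlMeas U u)
    (x x' : ℝ → EuclideanSpace ℝ (Fin n)) (hx : ACOn x x')
    (hxC : ∀ t ∈ Set.Icc (0:ℝ) 1, ψ (x t) ≤ 0) :
    (solD ψ f Φ' u x x' ↔ ∃ ξ : ℝ → ℝ, multP ψ ψ' f Φ' u x x' ξ) ∧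
    ∀ ξ : ℝ → ℝ, multP ψ ψ' f Φ' u x x' ξ →
      -- uniqueness
      (∀ ξ₂ : ℝ → ℝ, multP ψ ψ' f Φ' u x x' ξ₂ →
        ∀ᵐ t ∂(volume.restrict (Set.Icc (0:ℝ) 1)), ξ t = ξ₂ t) ∧
      -- ξ ∈ L^∞ with ‖ξ‖_∞ ≤ M̄/(2η)
      (∀ᵐ t ∂(volume.restrict (Set.Icc (0:ℝ) 1)), |ξ t| ≤ Mb / (2 * η)) ∧
      -- vanishing off the boundary, and the explicit formula on I⁰(x)
      (∀ t ∈ Set.Icc (0:ℝ) 1,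
        x t ∉ frontier {y : EuclideanSpace ℝ (Fin n) | ψ y ≤ 0} → ξ t = 0) ∧
      (∀ᵐ t ∂(volume.restrict (Set.Icc (0:ℝ) 1)),
        x t ∈ frontier {y : EuclideanSpace ℝ (Fin n) | ψ y ≤ 0} →
          ξ t = ‖x' t - (f (x t) (u t) - Φ' (x t))‖ / ‖ψ' (x t)‖ ∧
          ξ t ≤ Mb / (2 * η)) := by
  set C := {y : EuclideanSpace ℝ (Fin n) | ψ y ≤ 0}
  have hCV : C ⊆ thickening ρ C := self_subset_thickening hρ C
  have hfr0 : ∀ z ∈ frontier C, ψ z = 0 := fun z hz =>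
    eq_zero_of_mem_frontier_sublevel (hψd z (closure_subset_thickening hρ C hz.1)).continuousAt hz
  have hnz : ∀ z, ψ z = 0 → ψ' z ≠ 0 := fun z hz =>
    norm_pos_iff.1 (by linarith [hgrad z hz])
  have hcone := fun z (hz : ψ z ≤ 0) v =>
    mem_clarkeNC_sublevel_iff (v := v) isOpen_thickening hCV hψd hψc hψloclip hnz hz
  have htan : ∀ᵐ t ∂(volume.restrict (Icc (0 : ℝ) 1)),
      x t ∈ frontier C → ⟪ψ' (x t), x' t⟫ = 0 :=
    (hx.ae_inner_grad_eq_zero hxC fun t ht => hψd _ (hCV (hxC t ht))).mono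
      fun t h hfr => h (hfr0 _ hfr)
  have hUρ : ∀ t ∈ Icc (0 : ℝ) 1, U t ⊆ cthickening ρt (⋃ t ∈ Icc (0 : ℝ) 1, U t) :=
    fun t ht v hv => self_subset_cthickening _ (mem_biUnion ht hv)
  have hbd : ∀ᵐ t ∂(volume.restrict (Icc (0 : ℝ) 1)), ‖f (x t) (u t) - Φ' (x t)‖ ≤ Mb := by
    filter_upwards [hu.2, ae_restrict_mem measurableSet_Icc] with t hut ht
    exact hMbdef ▸ (norm_sub_le _ _).trans
      (add_le_add (hfbd _ (hxC t ht) _ (hUρ t ht hut)) (hΦ'bd _))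
  have hMb : 0 ≤ Mb := by
    have : (ae (volume.restrict (Icc (0 : ℝ) 1))).NeBot := ae_neBot.2 (by simp)
    obtain ⟨t, ht⟩ := hbd.exists
    exact (norm_nonneg _).trans ht
  have hfm : AEStronglyMeasurable (fun t => f (x t) (u t)) (volume.restrict (Icc (0 : ℝ) 1)) :=
    hflip.aestronglyMeasurable_comp (p := fun t => (x t, u t))
      ((hx.continuousOn.aemeasurable measurableSet_Icc).prodMk hu.1.aemeasurable)
      (by filter_upwards [hu.2, ae_restrict_mem measurableSet_Icc] with t hut ht
          exact ⟨hxC t ht, hUρ t ht hut⟩)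
  refine ⟨⟨exists_multP_of_solD hxC hcone (hψc.mono hCV) hΦ'lip.continuous hfm,
    fun ⟨ξ, hξ⟩ => solD_of_multP hx hxC hcone hξ⟩, fun ξ hξ => ?_⟩
  have hform := hξ.ae_eq_div hη (fun z hz => hgrad z (hfr0 z hz)) htan hbd
  exact ⟨fun ξ₂ hξ₂ => hξ.ae_eq (fun z hz => hnz z (hfr0 z hz)) hξ₂,
    hξ.ae_abs_le hη hMb (hform.mono fun t h hfr => (h hfr).2), hξ.2.2.1, hform⟩

/-- Characterization of the solutions of `(D)`: `x` solves `(D)` with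
control `u` iff there is a nonnegative measurable multiplier `ξ` supported on `I⁰(x)` with
`ẋ = f_Φ(x,u) − ξ∇ψ(x)` a.e.; such a `ξ` is unique, essentially bounded by `M̄/(2η)`, and on
`I⁰(x)` it is given a.e. by `‖ẋ − f_Φ(x,u)‖/‖∇ψ(x)‖ ∈ [0, M̄/(2η)]`. -/
theorem stmt_8 {n m : ℕ}
    (ψ : EuclideanSpace ℝ (Fin n) → ℝ)
    (ψ' : EuclideanSpace ℝ (Fin n) → EuclideanSpace ℝ (Fin n))
    (ρ η : ℝ) (hρ : 0 < ρ) (hη : 0 < η)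
    -- (A2.1): ψ is C¹ with locally Lipschitz gradient on C + ρB
    (hψd : ∀ x ∈ Metric.thickening ρ {x : EuclideanSpace ℝ (Fin n) | ψ x ≤ 0},
      HasGradientAt ψ (ψ' x) x)
    (hψc : ContinuousOn ψ' (Metric.thickening ρ {x : EuclideanSpace ℝ (Fin n) | ψ x ≤ 0}))
    (hψloclip : ∀ x ∈ Metric.thickening ρ {x : EuclideanSpace ℝ (Fin n) | ψ x ≤ 0},
      ∃ K : NNReal, ∃ s ∈ nhdsWithin x (Metric.thickening ρ {x : EuclideanSpace ℝ (Fin n) | ψ x ≤ 0}),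
        LipschitzOnWith K ψ' s)
    -- (A2.2)
    (hgrad : ∀ x, ψ x = 0 → 2 * η < ‖ψ' x‖)
    -- (A2.3): coercivity
    (hcoer : ∀ Mc : ℝ, ∃ R : ℝ, ∀ x : EuclideanSpace ℝ (Fin n), R ≤ ‖x‖ → Mc ≤ ψ x)
    -- (A2.4): connected interior
    (hconn : IsConnected (interior {x : EuclideanSpace ℝ (Fin n) | ψ x ≤ 0}))
    -- (A1): the control sets and the Lipschitz, bounded dynamics f
    (U : ℝ → Set (EuclideanSpace ℝ (Fin m)))
    (f : EuclideanSpace ℝ (Fin n) → EuclideanSpace ℝ (Fin m) → EuclideanSpace ℝ (Fin n))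
    (M ρt : ℝ) (hρt : 0 < ρt)
    (hflip : LipschitzOnWith (Real.toNNReal M)
      (fun p : (EuclideanSpace ℝ (Fin n)) × (EuclideanSpace ℝ (Fin m)) => f p.1 p.2)
      ({x : EuclideanSpace ℝ (Fin n) | ψ x ≤ 0} ×ˢ
        Metric.cthickening ρt (⋃ t ∈ Set.Icc (0:ℝ) 1, U t)))
    (hfbd : ∀ x, ψ x ≤ 0 → ∀ v ∈ Metric.cthickening ρt (⋃ t ∈ Set.Icc (0:ℝ) 1, U t),
      ‖f x v‖ ≤ M)
    -- (A3) and the C¹ bounded Lipschitz extension Φ of φ, with gradient Φ'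
    (φ Φ : EuclideanSpace ℝ (Fin n) → ℝ)
    (Φ' : EuclideanSpace ℝ (Fin n) → EuclideanSpace ℝ (Fin n)) (K : ℝ)
    (hφlip : ∃ Lφ : NNReal, LipschitzOnWith Lφ φ {x : EuclideanSpace ℝ (Fin n) | ψ x ≤ 0})
    (hφd : ∀ x ∈ interior {x : EuclideanSpace ℝ (Fin n) | ψ x ≤ 0}, HasGradientAt φ (Φ' x) x)
    (hΦext : ∀ x, ψ x ≤ 0 → Φ x = φ x)
    (hΦd : ∀ x, HasGradientAt Φ (Φ' x) x)
    (hΦbd : ∀ x, |Φ x| ≤ K) (hΦ'bd : ∀ x, ‖Φ' x‖ ≤ K)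
    (hΦlip : LipschitzWith (Real.toNNReal K) Φ)
    (hΦ'lip : LipschitzWith (Real.toNNReal K) Φ')
    (Mb : ℝ) (hMbdef : Mb = M + K)
    -- the penalty parameters
    (γ : ℕ → ℝ) (hγlb : ∀ k, 2 * Mb / η < γ k) (hγtop : Tendsto γ atTop atTop)
    -- the initial set C₀ ⊆ C
    (C₀ : Set (EuclideanSpace ℝ (Fin n)))
    (hC₀ : C₀ ⊆ {x : EuclideanSpace ℝ (Fin n) | ψ x ≤ 0})
    -- the data: u ∈ 𝒰, x absolutely continuous, x(0) ∈ C₀, x(t) ∈ C for all t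
    (u : ℝ → EuclideanSpace ℝ (Fin m)) (hu : ctrlMeas U u)
    (x x' : ℝ → EuclideanSpace ℝ (Fin n)) (hx : ACOn x x')
    (hx0 : x 0 ∈ C₀) (hxC : ∀ t ∈ Set.Icc (0:ℝ) 1, ψ (x t) ≤ 0) :
    (solD ψ f Φ' u x x' ↔ ∃ ξ : ℝ → ℝ, multP ψ ψ' f Φ' u x x' ξ) ∧
    ∀ ξ : ℝ → ℝ, multP ψ ψ' f Φ' u x x' ξ →
      -- uniqueness
      (∀ ξ₂ : ℝ → ℝ, multP ψ ψ' f Φ' u x x' ξ₂ →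
        ∀ᵐ t ∂(volume.restrict (Set.Icc (0:ℝ) 1)), ξ t = ξ₂ t) ∧
      -- ξ ∈ L^∞ with ‖ξ‖_∞ ≤ M̄/(2η)
      (∀ᵐ t ∂(volume.restrict (Set.Icc (0:ℝ) 1)), |ξ t| ≤ Mb / (2 * η)) ∧
      -- vanishing off the boundary, and the explicit formula on I⁰(x)
      (∀ t ∈ Set.Icc (0:ℝ) 1,
        x t ∉ frontier {y : EuclideanSpace ℝ (Fin n) | ψ y ≤ 0} → ξ t = 0) ∧
      (∀ᵐ t ∂(volume.restrict (Set.Icc (0:ℝ) 1)),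
        x t ∈ frontier {y : EuclideanSpace ℝ (Fin n) | ψ y ≤ 0} →
          ξ t = ‖x' t - (f (x t) (u t) - Φ' (x t))‖ / ‖ψ' (x t)‖ ∧
          ξ t ≤ Mb / (2 * η)) :=
  stmt_8_general ψ ψ' ρ η hρ hη hψd hψc hψloclip hgrad U f M ρt hflip hfbd Φ' K hΦ'bd hΦ'lip Mb
    hMbdef u hu x x' hx hxC
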